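/- arXiv:2504.13542 — 2 statements merged into one kernel-verified Lean document; each statement's English description precedes it below -/
import Mathlib

section
/- For every k ≥ 0, the number of walks of length n in the quarter plane with steps {(−1,1),(1,1),(1,−1)} from (0,0) to any point of the antidiagonal segment S_{2k} is at most (2 cos(π/(2k+2)))^n · C for some constant C depending only on k; consequently the generating series Σ_n #{(0,0)→ⁿ Q} t^n has radius of convergence at least (2 cos(π/(2k+2)))^{-1} > 1/2 for every Q ∈ S_{2k}. -/
def qwalks (S : Finset (ℤ × ℤ)) : ℕ → ℤ × ℤ → ℤ × ℤ → ℕ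
  | 0, p, q => if p = q then 1 else 0
  | n+1, p, q => ∑ s ∈ S, if 0 ≤ (p + s).1 ∧ 0 ≤ (p + s).2 then qwalks S n (p + s) q else 0

def stepsA : Finset (ℤ × ℤ) := {(-1, 1), (1, 1), (1, -1)}

noncomputable def lam (k : ℕ) : ℝ := 2 * Real.cos (Real.pi / (2 * (k : ℝ) + 2))

noncomputable def bb (k : ℕ) : ℕ → ℝ
  | 0 => 1
  | l+1 => (lam k - 2 * Real.cos (Real.pi / (2 * (l : ℝ) + 2)))
      * Real.sin (Real.pi / (2 * (l : ℝ) + 2)) * bb k l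

noncomputable def W (k l i : ℕ) : ℝ :=
  bb k l * Real.sin (((i : ℝ) + 1) * (Real.pi / (2 * (l : ℝ) + 2)))

lemma theta_pos (l : ℕ) : 0 < Real.pi / (2 * (l : ℝ) + 2) := by
  apply div_pos Real.pi_pos; positivity

lemma theta_le (l : ℕ) : Real.pi / (2 * (l : ℝ) + 2) ≤ Real.pi / 2 := by
  apply div_le_div_of_nonneg_left Real.pi_pos.le (by norm_num)
  · linarith [Nat.cast_nonneg (α := ℝ) l]

lemma theta_lt_pi (l : ℕ) : Real.pi / (2 * (l : ℝ) + 2) < Real.pi := by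
  have := theta_le l
  linarith [Real.pi_pos]

lemma sin_theta_pos (l : ℕ) : 0 < Real.sin (Real.pi / (2 * (l : ℝ) + 2)) :=
  Real.sin_pos_of_pos_of_lt_pi (theta_pos l) (theta_lt_pi l)

lemma cos_lt_of_lt {l k : ℕ} (h : l < k) :
    Real.cos (Real.pi / (2 * (l : ℝ) + 2)) < Real.cos (Real.pi / (2 * (k : ℝ) + 2)) := by
  have h1 : Real.pi / (2 * (k : ℝ) + 2) < Real.pi / (2 * (l : ℝ) + 2) := by
    apply div_lt_div_of_pos_left Real.pi_pos (by positivity)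
    have : (l : ℝ) < k := by exact_mod_cast h
    linarith
  exact Real.strictAntiOn_cos ⟨(theta_pos k).le, (theta_lt_pi k).le⟩
    ⟨(theta_pos l).le, (theta_lt_pi l).le⟩ h1

lemma lam_nonneg (k : ℕ) : 0 ≤ lam k := by
  unfold lam
  have := Real.cos_nonneg_of_mem_Icc (x := Real.pi / (2 * (k : ℝ) + 2))
    ⟨by linarith [theta_pos k, Real.pi_pos], theta_le k⟩
  linarith

lemma bb_pos (k : ℕ) : ∀ l, l ≤ k → 0 < bb k l
  | 0, _ => by norm_num [bb]
  | l+1, h => by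
    have h1 : l < k := h
    have h2 := cos_lt_of_lt h1
    have hb := bb_pos k l (le_of_lt h1)
    have hs := sin_theta_pos l
    show 0 < (lam k - 2 * Real.cos (Real.pi / (2 * (l : ℝ) + 2)))
        * Real.sin (Real.pi / (2 * (l : ℝ) + 2)) * bb k l
    have hg : 0 < lam k - 2 * Real.cos (Real.pi / (2 * (l : ℝ) + 2)) := by
      unfold lam; linarith
    positivity

lemma sin_min {a x : ℝ} (ha : 0 < a) (h1 : a ≤ x) (h2 : x ≤ Real.pi - a) :
    Real.sin a ≤ Real.sin x := by
  have hπ := Real.pi_pos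
  have hapi : a ≤ Real.pi / 2 := by linarith
  have hm1 : a ∈ Set.Icc (-(Real.pi/2)) (Real.pi/2) := ⟨by linarith, hapi⟩
  rcases le_or_gt x (Real.pi / 2) with hx | hx
  · have hm2 : x ∈ Set.Icc (-(Real.pi/2)) (Real.pi/2) := ⟨by linarith, hx⟩
    exact Real.strictMonoOn_sin.monotoneOn hm1 hm2 h1
  · rw [← Real.sin_pi_sub x]
    have hm2 : Real.pi - x ∈ Set.Icc (-(Real.pi/2)) (Real.pi/2) := ⟨by linarith, by linarith⟩
    exact Real.strictMonoOn_sin.monotoneOn hm1 hm2 (by linarith)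

lemma sin_lower (l i : ℕ) (hi : i ≤ 2 * l) :
    Real.sin (Real.pi / (2 * (l : ℝ) + 2))
      ≤ Real.sin (((i : ℝ) + 1) * (Real.pi / (2 * (l : ℝ) + 2))) := by
  set θ := Real.pi / (2 * (l : ℝ) + 2) with hθ
  have hp := theta_pos l
  apply sin_min hp
  · nlinarith [Nat.cast_nonneg (α := ℝ) i]
  · have hi' : (i : ℝ) ≤ 2 * l := by exact_mod_cast hi
    have hpi : (2 * (l : ℝ) + 2) * θ = Real.pi := by
      rw [hθ]; field_simp
    nlinarith

lemma W_pos (k l i : ℕ) (hl : l ≤ k) (hi : i ≤ 2 * l) : 0 < W k l i := by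
  have := bb_pos k l hl
  have := lt_of_lt_of_le (sin_theta_pos l) (sin_lower l i hi)
  unfold W; positivity

lemma keyH (k l i j : ℕ) (hij : i + j = 2 * l) (hl : l ≤ k) :
    (if i = 0 then 0 else W k l (i - 1))
      + (if l = k then 0 else W k (l + 1) (i + 1))
      + (if j = 0 then 0 else W k l (i + 1)) ≤ lam k * W k l i := by
  set θ := Real.pi / (2 * (l : ℝ) + 2) with hθ
  have hi2l : i ≤ 2 * l := by omega
  have hbpos := bb_pos k l hl
  have h1 : (if i = 0 then (0:ℝ) else W k l (i - 1)) = bb k l * Real.sin ((i : ℝ) * θ) := by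
    rcases Nat.eq_zero_or_pos i with h | h
    · simp [h]
    · rw [if_neg (by omega)]
      unfold W
      congr 2
      have : ((i - 1 : ℕ) : ℝ) = (i : ℝ) - 1 := by
        rw [Nat.cast_sub h]; norm_num
      rw [this]; ring
  have hpi : (2 * (l : ℝ) + 2) * θ = Real.pi := by rw [hθ]; field_simp
  have h2 : (if j = 0 then (0:ℝ) else W k l (i + 1)) = bb k l * Real.sin (((i : ℝ) + 2) * θ) := by
    rcases Nat.eq_zero_or_pos j with h | h
    · have hi' : i = 2 * l := by omega
      have : ((i : ℝ) + 2) * θ = Real.pi := by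
        rw [hi']; push_cast; rw [← hpi]
      simp [h, this]
    · rw [if_neg (by omega)]
      show bb k l * Real.sin ((((i+1 : ℕ) : ℝ) + 1) * (Real.pi / (2 * (l : ℝ) + 2))) = _
      rw [← hθ]
      push_cast
      ring_nf
  have hsum : Real.sin ((i : ℝ) * θ) + Real.sin (((i : ℝ) + 2) * θ)
      = 2 * Real.cos θ * Real.sin (((i : ℝ) + 1) * θ) := by
    have e1 : (i : ℝ) * θ = ((i : ℝ) + 1) * θ - θ := by ring
    have e2 : ((i : ℝ) + 2) * θ = ((i : ℝ) + 1) * θ + θ := by ring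
    rw [e1, e2, Real.sin_sub, Real.sin_add]; ring
  rw [h1, h2]
  have hWdef : W k l i = bb k l * Real.sin (((i : ℝ) + 1) * θ) := rfl
  have e : bb k l * Real.sin ((i : ℝ) * θ) + bb k l * Real.sin (((i : ℝ) + 2) * θ)
      = 2 * Real.cos θ * W k l i := by
    rw [hWdef]; linear_combination bb k l * hsum
  rcases eq_or_lt_of_le hl with hlk | hlk
  · rw [if_pos hlk]
    have hlamk : lam k = 2 * Real.cos θ := by rw [hθ, hlk]; rfl
    rw [hlamk]
    linarith [e]
  · rw [if_neg (by omega)]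
    have hgap : 0 < lam k - 2 * Real.cos θ := by
      have := cos_lt_of_lt hlk
      unfold lam; rw [hθ]; linarith
    have h3 : W k (l + 1) (i + 1) ≤ bb k (l + 1) := by
      unfold W
      have hb1 := bb_pos k (l + 1) hlk
      nlinarith [Real.sin_le_one ((((i + 1 : ℕ) : ℝ) + 1) * (Real.pi / (2 * ((l + 1 : ℕ) : ℝ) + 2)))]
    have h4 : bb k (l + 1) ≤ (lam k - 2 * Real.cos θ) * W k l i := by
      show (lam k - 2 * Real.cos (Real.pi / (2 * (l : ℝ) + 2)))
          * Real.sin (Real.pi / (2 * (l : ℝ) + 2)) * bb k l ≤ _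
      rw [hWdef]
      have hsl := sin_lower l i hi2l
      rw [← hθ] at hsl ⊢
      nlinarith [mul_le_mul_of_nonneg_left hsl (mul_nonneg hgap.le hbpos.le)]
    linarith [e, h3.trans h4]

lemma stepsum {s : ℤ × ℤ} (hs : s ∈ stepsA) : s.1 + s.2 = 0 ∨ s.1 + s.2 = 2 := by
  fin_cases hs <;> simp

lemma L1 : ∀ (n : ℕ) (p q : ℤ × ℤ), q.1 + q.2 < p.1 + p.2 → qwalks stepsA n p q = 0
  | 0, p, q, h => by
    simp only [qwalks]
    rw [if_neg]
    rintro rfl; exact lt_irrefl _ h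
  | n+1, p, q, h => by
    simp only [qwalks]
    apply Finset.sum_eq_zero
    intro s hs
    split_ifs with hc
    · apply L1 n
      rcases stepsum hs with h0 | h2 <;>
        simp only [Prod.fst_add, Prod.snd_add] <;> linarith
    · rfl


lemma L2 (k qi qj : ℕ) (hq : qi + qj = 2 * k) :
    ∀ (n i j l : ℕ), i + j = 2 * l → l ≤ k →
      (qwalks stepsA n ((i : ℤ), (j : ℤ)) ((qi : ℤ), (qj : ℤ)) : ℝ) * W k k qi
        ≤ (lam k) ^ n * W k l i := by
  have hqi : qi ≤ 2 * k := by omega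
  have hWq : 0 < W k k qi := W_pos k k qi le_rfl hqi
  intro n
  induction n with
  | zero =>
    intro i j l hij hl
    have hWi : 0 < W k l i := W_pos k l i hl (by omega)
    simp only [qwalks]
    split
    · rename_i heq
      injection heq with ha hb
      have hiq : i = qi := by exact_mod_cast ha
      have hjq : j = qj := by exact_mod_cast hb
      have hlk : l = k := by omega
      rw [hiq, hlk]
      norm_num
    · norm_num
      linarith
  | succ n IH =>
    intro i j l hij hl
    have hlam := lam_nonneg k
    have hln : (0:ℝ) ≤ (lam k) ^ n := pow_nonneg hlam n
    have hrw : (qwalks stepsA (n+1) ((i : ℤ), (j : ℤ)) ((qi : ℤ), (qj : ℤ)) : ℝ)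
        = (if 0 ≤ (i:ℤ) + -1 ∧ 0 ≤ (j:ℤ) + 1 then
            (qwalks stepsA n ((i:ℤ) + -1, (j:ℤ) + 1) ((qi : ℤ), (qj : ℤ)) : ℝ) else 0)
          + ((if 0 ≤ (i:ℤ) + 1 ∧ 0 ≤ (j:ℤ) + 1 then
            (qwalks stepsA n ((i:ℤ) + 1, (j:ℤ) + 1) ((qi : ℤ), (qj : ℤ)) : ℝ) else 0)
          + (if 0 ≤ (i:ℤ) + 1 ∧ 0 ≤ (j:ℤ) + -1 then
            (qwalks stepsA n ((i:ℤ) + 1, (j:ℤ) + -1) ((qi : ℤ), (qj : ℤ)) : ℝ) else 0)) := by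
      show ((∑ s ∈ stepsA, _ : ℕ) : ℝ) = _
      rw [stepsA, Finset.sum_insert (by decide), Finset.sum_insert (by decide),
        Finset.sum_singleton]
      push_cast
      rfl
    rw [hrw]
    have hT1 : (if 0 ≤ (i:ℤ) + -1 ∧ 0 ≤ (j:ℤ) + 1 then
          (qwalks stepsA n ((i:ℤ) + -1, (j:ℤ) + 1) ((qi : ℤ), (qj : ℤ)) : ℝ) else 0) * W k k qi
        ≤ (lam k) ^ n * (if i = 0 then 0 else W k l (i - 1)) := by
      rcases Nat.eq_zero_or_pos i with h | h
      · rw [if_neg (show ¬((0:ℤ) ≤ (i:ℤ) + -1 ∧ (0:ℤ) ≤ (j:ℤ) + 1) by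
          omega), if_pos h]
        simp
      · rw [if_pos (show (0:ℤ) ≤ (i:ℤ) + -1 ∧ (0:ℤ) ≤ (j:ℤ) + 1 by omega),
          if_neg (show ¬ i = 0 by omega)]
        have e1 : (i : ℤ) + -1 = ((i - 1 : ℕ) : ℤ) := by omega
        have e2 : (j : ℤ) + 1 = ((j + 1 : ℕ) : ℤ) := by omega
        rw [e1, e2]
        exact IH (i-1) (j+1) l (by omega) hl
    have hT2 : (if 0 ≤ (i:ℤ) + 1 ∧ 0 ≤ (j:ℤ) + 1 then
          (qwalks stepsA n ((i:ℤ) + 1, (j:ℤ) + 1) ((qi : ℤ), (qj : ℤ)) : ℝ) else 0) * W k k qi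
        ≤ (lam k) ^ n * (if l = k then 0 else W k (l + 1) (i + 1)) := by
      rw [if_pos (show (0:ℤ) ≤ (i:ℤ) + 1 ∧ (0:ℤ) ≤ (j:ℤ) + 1 by omega)]
      rcases eq_or_lt_of_le hl with hlk | hlk
      · rw [if_pos hlk]
        have hz : qwalks stepsA n ((i:ℤ) + 1, (j:ℤ) + 1) ((qi : ℤ), (qj : ℤ)) = 0 := by
          apply L1
          show (qi : ℤ) + (qj : ℤ) < ((i:ℤ) + 1) + ((j:ℤ) + 1)
          omega
        rw [hz]
        simp
      · rw [if_neg (by omega)]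
        have e1 : (i : ℤ) + 1 = ((i + 1 : ℕ) : ℤ) := by omega
        have e2 : (j : ℤ) + 1 = ((j + 1 : ℕ) : ℤ) := by omega
        rw [e1, e2]
        exact IH (i+1) (j+1) (l+1) (by omega) (by omega)
    have hT3 : (if 0 ≤ (i:ℤ) + 1 ∧ 0 ≤ (j:ℤ) + -1 then
          (qwalks stepsA n ((i:ℤ) + 1, (j:ℤ) + -1) ((qi : ℤ), (qj : ℤ)) : ℝ) else 0) * W k k qi
        ≤ (lam k) ^ n * (if j = 0 then 0 else W k l (i + 1)) := by
      rcases Nat.eq_zero_or_pos j with h | h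
      · rw [if_neg (show ¬((0:ℤ) ≤ (i:ℤ) + 1 ∧ (0:ℤ) ≤ (j:ℤ) + -1) by
          omega), if_pos h]
        simp
      · rw [if_pos (show (0:ℤ) ≤ (i:ℤ) + 1 ∧ (0:ℤ) ≤ (j:ℤ) + -1 by omega),
          if_neg (show ¬ j = 0 by omega)]
        have e1 : (i : ℤ) + 1 = ((i + 1 : ℕ) : ℤ) := by omega
        have e2 : (j : ℤ) + -1 = ((j - 1 : ℕ) : ℤ) := by omega
        rw [e1, e2]
        exact IH (i+1) (j-1) l (by omega) hl
    have hkey := keyH k l i j hij hl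
    calc _ ≤ (lam k) ^ n * ((if i = 0 then 0 else W k l (i - 1))
            + (if l = k then 0 else W k (l + 1) (i + 1))
            + (if j = 0 then 0 else W k l (i + 1))) := by
          rw [add_mul, add_mul, mul_add, mul_add]
          linarith [hT1, hT2, hT3]
      _ ≤ (lam k) ^ n * (lam k * W k l i) :=
          mul_le_mul_of_nonneg_left hkey hln
      _ = (lam k) ^ (n+1) * W k l i := by ring

lemma qbound (k : ℕ) :
    ∀ (n i j : ℕ), i + j = 2 * k →
      (qwalks stepsA n (0, 0) ((i : ℤ), (j : ℤ)) : ℝ)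
        ≤ (lam k) ^ n * (∑ i' ∈ Finset.range (2*k+1), W k 0 0 / W k k i') := by
  intro n i j hij
  have hi : i ≤ 2 * k := by omega
  have hWi : 0 < W k k i := W_pos k k i le_rfl hi
  have h2 := L2 k i j hij n 0 0 0 (by omega) (Nat.zero_le k)
  norm_num at h2
  have hln : (0:ℝ) ≤ (lam k) ^ n := pow_nonneg (lam_nonneg k) n
  have step1 : (qwalks stepsA n (0, 0) ((i : ℤ), (j : ℤ)) : ℝ)
      ≤ (lam k) ^ n * (W k 0 0 / W k k i) := by
    rw [mul_div_assoc'] at *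
    exact (le_div_iff₀ hWi).mpr h2
  apply step1.trans
  apply mul_le_mul_of_nonneg_left _ hln
  apply Finset.single_le_sum (a := i) (f := fun i' => W k 0 0 / W k k i')
  · intro i' hi'
    have : i' ≤ 2 * k := by
      simp only [Finset.mem_range] at hi'; omega
    exact div_nonneg (W_pos k 0 0 (Nat.zero_le k) (by omega)).le (W_pos k k i' le_rfl this).le
  · simp only [Finset.mem_range]; omega

/-- For every k, the number of model-A walks of length n from (0,0) to a point of the
antidiagonal S_{2k} is at most C·(2 cos(π/(2k+2)))^n; consequently the generating series
converges for all |t| < (2 cos(π/(2k+2)))^{-1}, a bound which exceeds 1/2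
(since cos(π/(2k+2)) < 1). -/
theorem stmt7 (k : ℕ) :
    ∃ C : ℝ,
      (∀ (n i j : ℕ), i + j = 2 * k →
        (qwalks stepsA n (0, 0) ((i : ℤ), (j : ℤ)) : ℝ)
          ≤ (2 * Real.cos (Real.pi / (2 * (k : ℝ) + 2))) ^ n * C) ∧
      (∀ t : ℝ, 2 * Real.cos (Real.pi / (2 * (k : ℝ) + 2)) * |t| < 1 →
        ∀ i j : ℕ, i + j = 2 * k →
          Summable fun n : ℕ => (qwalks stepsA n (0, 0) ((i : ℤ), (j : ℤ)) : ℝ) * t ^ n) ∧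
      Real.cos (Real.pi / (2 * (k : ℝ) + 2)) < 1 := by
  set C := ∑ i' ∈ Finset.range (2*k+1), W k 0 0 / W k k i' with hC
  have hC0 : 0 ≤ C := by
    apply Finset.sum_nonneg
    intro i' hi'
    have : i' ≤ 2 * k := by simp only [Finset.mem_range] at hi'; omega
    exact div_nonneg (W_pos k 0 0 (Nat.zero_le k) (by omega)).le (W_pos k k i' le_rfl this).le
  refine ⟨C, fun n i j hij => qbound k n i j hij, ?_, ?_⟩
  · intro t ht i j hij
    have hlam := lam_nonneg k
    have hr0 : 0 ≤ lam k * |t| := mul_nonneg hlam (abs_nonneg t)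
    have hr1 : lam k * |t| < 1 := ht
    have hgeo : Summable (fun n : ℕ => C * (lam k * |t|) ^ n) :=
      (summable_geometric_of_lt_one hr0 hr1).mul_left C
    apply Summable.of_abs
    apply Summable.of_nonneg_of_le (fun n => abs_nonneg _) _ hgeo
    intro n
    rw [abs_mul, abs_pow, Nat.abs_cast]
    have hb := qbound k n i j hij
    have htn : (0:ℝ) ≤ |t| ^ n := pow_nonneg (abs_nonneg t) n
    calc (qwalks stepsA n (0, 0) ((i : ℤ), (j : ℤ)) : ℝ) * |t| ^ n
        ≤ ((lam k) ^ n * C) * |t| ^ n := mul_le_mul_of_nonneg_right hb htn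
      _ = C * (lam k * |t|) ^ n := by rw [mul_pow]; ring
  · have h1 := theta_pos k
    have h2 := theta_lt_pi k
    have := Real.strictAntiOn_cos (Set.mem_Icc.mpr ⟨le_rfl, Real.pi_pos.le⟩)
      (Set.mem_Icc.mpr ⟨h1.le, h2.le⟩) h1
    rwa [Real.cos_zero] at this
end

section
/- The Bernoulli numbers satisfy Euler's quadratic recurrence: for every n > 1, (2n+1) B_{2n} + Σ_{i=1}^{n−1} C(2n, 2i) B_{2i} B_{2n−2i} = 0. -/
open PowerSeries Finset Nat

lemma myderiv_exp : d⁄dX ℚ (exp ℚ) = exp ℚ := by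
  ext n
  rw [PowerSeries.coeff_derivative, coeff_exp, coeff_exp]
  simp [Nat.factorial_succ]
  field_simp

lemma exp_sub_one_ne : (exp ℚ - 1 : ℚ⟦X⟧) ≠ 0 := by
  intro h
  have := congrArg (coeff 1) h
  simp [coeff_exp, coeff_one] at this

lemma B_sq : (bernoulliPowerSeries ℚ) * (bernoulliPowerSeries ℚ) =
    bernoulliPowerSeries ℚ - X * bernoulliPowerSeries ℚ
      - X * d⁄dX ℚ (bernoulliPowerSeries ℚ) := by
  set B := bernoulliPowerSeries ℚ with hB
  set E : ℚ⟦X⟧ := exp ℚ - 1 with hE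
  have hBE : B * E = X := bernoulliPowerSeries_mul_exp_sub_one ℚ
  have hdE : d⁄dX ℚ E = E + 1 := by
    rw [hE, map_sub, myderiv_exp, Derivation.map_one_eq_zero]; ring
  have hdBE : (d⁄dX ℚ B) * E = 1 - X - B := by
    have h1 : d⁄dX ℚ (B * E) = 1 := by rw [hBE, derivative_X]
    rw [Derivation.leibniz, smul_eq_mul, smul_eq_mul, hdE] at h1
    linear_combination h1 - hBE
  apply mul_right_cancel₀ exp_sub_one_ne
  show B * B * E = (B - X * B - X * d⁄dX ℚ B) * E
  linear_combination (X - 1 + B : ℚ⟦X⟧) * hBE + (X : ℚ⟦X⟧) * hdBE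

lemma quad (n : ℕ) (hn : 1 ≤ n) :
    ∑ k ∈ Finset.range (n + 1), (n.choose k : ℚ) * bernoulli k * bernoulli (n - k)
      = bernoulli n - n * bernoulli (n - 1) - n * bernoulli n := by
  obtain ⟨p, rfl⟩ : ∃ p, n = p + 1 := ⟨n - 1, by omega⟩
  have hcoeff : ∀ k, coeff k (bernoulliPowerSeries ℚ) = bernoulli k / k ! := by
    intro k; simp [bernoulliPowerSeries, coeff_mk]
  have h := congrArg (coeff (p + 1)) B_sq
  rw [PowerSeries.coeff_mul, map_sub, map_sub, coeff_succ_X_mul, coeff_succ_X_mul,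
    PowerSeries.coeff_derivative] at h
  simp only [hcoeff] at h
  rw [Finset.Nat.sum_antidiagonal_eq_sum_range_succ
      (fun a b => bernoulli a / a ! * (bernoulli b / b !))] at h
  have h3 := congrArg (fun x : ℚ => ((p + 1)! : ℚ) * x) h
  simp only [Finset.mul_sum] at h3
  have hfac : ∀ m : ℕ, (m ! : ℚ) ≠ 0 := fun m => by exact_mod_cast Nat.factorial_ne_zero m
  calc ∑ k ∈ Finset.range (p + 1 + 1), ((p + 1).choose k : ℚ) * bernoulli k * bernoulli (p + 1 - k)
      = ∑ k ∈ Finset.range (p + 1 + 1),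
          ((p + 1)! : ℚ) * (bernoulli k / k ! * (bernoulli (p + 1 - k) / (p + 1 - k)!)) := by
        refine Finset.sum_congr rfl fun k hk => ?_
        have hkN : k ≤ p + 1 := Nat.lt_succ_iff.mp (Finset.mem_range.mp hk)
        rw [Nat.cast_choose ℚ hkN]
        field_simp
    _ = ((p + 1)! : ℚ) * (bernoulli (p + 1) / ((p + 1)! : ℚ) - bernoulli p / (p ! : ℚ)
          - bernoulli (p + 1) / ((p + 1)! : ℚ) * (↑p + 1)) := by rw [h3]
    _ = bernoulli (p + 1) - (↑(p + 1)) * bernoulli (p + 1 - 1) - (↑(p + 1)) * bernoulli (p + 1) := by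
        have hNf : ((p + 1)! : ℚ) = (p + 1) * p ! := by
          rw [Nat.factorial_succ]; push_cast; ring
        simp only [Nat.add_sub_cancel]
        rw [hNf]
        field_simp
        push_cast
        ring

/-- Euler's quadratic recurrence for Bernoulli numbers: for n > 1,
(2n+1) B_{2n} + Σ_{i=1}^{n−1} C(2n,2i) B_{2i} B_{2n−2i} = 0. -/
theorem stmt12 (n : ℕ) (hn : 1 < n) :
    (2 * (n : ℚ) + 1) * bernoulli (2 * n) +
      ∑ i ∈ Finset.Icc 1 (n - 1),
        ((2 * n).choose (2 * i) : ℚ) * bernoulli (2 * i) * bernoulli (2 * n - 2 * i) = 0 := by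
  set f : ℕ → ℚ := fun k => ((2 * n).choose k : ℚ) * bernoulli k * bernoulli (2 * n - k) with hf
  have hq := quad (2 * n) (by omega)
  have hodd : bernoulli (2 * n - 1) = 0 := by
    rw [bernoulli_eq_bernoulli'_of_ne_one (by omega)]
    exact bernoulli'_eq_zero_of_odd ⟨n - 1, by omega⟩ (by omega)
  have hset : ∑ k ∈ Finset.range (2 * n + 1), f k
      = ∑ k ∈ insert 0 (insert (2 * n) ((Finset.Icc 1 (n - 1)).image (2 * ·))), f k := by
    symm
    apply Finset.sum_subset
    · intro k hk
      simp only [Finset.mem_insert, Finset.mem_image, Finset.mem_Icc, Finset.mem_range] at hk ⊢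
      rcases hk with rfl | rfl | ⟨i, ⟨hi1, hi2⟩, rfl⟩ <;> omega
    · intro k hk hk2
      simp only [Finset.mem_insert, Finset.mem_image, Finset.mem_Icc, Finset.mem_range] at hk hk2
      push_neg at hk2
      obtain ⟨h0, h2n, hi⟩ := hk2
      rcases Nat.even_or_odd k with ⟨i, rfl⟩ | hodd'
      · exact absurd (by omega : 2 * i = i + i) (hi i ⟨by omega, by omega⟩)
      · rcases eq_or_ne k 1 with rfl | hk1
        · simp [f, hodd]
        · have : bernoulli k = 0 := by
            rw [bernoulli_eq_bernoulli'_of_ne_one hk1]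
            exact bernoulli'_eq_zero_of_odd hodd' (by omega)
          simp [f, this]
  have hmem1 : (0 : ℕ) ∉ insert (2 * n) ((Finset.Icc 1 (n - 1)).image (2 * ·)) := by
    simp only [Finset.mem_insert, Finset.mem_image, Finset.mem_Icc]
    push_neg
    exact ⟨by omega, fun i hi => by omega⟩
  have hmem2 : 2 * n ∉ (Finset.Icc 1 (n - 1)).image (2 * ·) := by
    simp only [Finset.mem_image, Finset.mem_Icc]
    push_neg
    intro i hi; omega
  rw [hset, Finset.sum_insert hmem1, Finset.sum_insert hmem2,
    Finset.sum_image (fun a _ b _ h => by omega)] at hq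
  have hf0 : f 0 = bernoulli (2 * n) := by simp [f]
  have hf2n : f (2 * n) = bernoulli (2 * n) := by simp [f]
  rw [hf0, hf2n, hodd] at hq
  have heq : ∑ i ∈ Finset.Icc 1 (n - 1), f (2 * i)
      = ∑ i ∈ Finset.Icc 1 (n - 1),
        ((2 * n).choose (2 * i) : ℚ) * bernoulli (2 * i) * bernoulli (2 * n - 2 * i) := rfl
  rw [heq] at hq
  push_cast at hq ⊢
  linarith
end
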